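/- Let P_1, …, P_m be n×n real symmetric idempotent matrices and p_1, …, p_m nonnegative reals with Σ_{i=1}^m p_i = 1. Set 𝐙_i := I ⊗ I − (I − P_i) ⊗ (I − P_i). Then λ_min( Σ_{i=1}^m p_i P_i ) ≤ λ_min( Σ_{i=1}^m p_i 𝐙_i ) ≤ 2 λ_min( Σ_{i=1}^m p_i P_i ). (Hence the parameter μ = λ_min(E[𝐙]) of the symmetry-preserving method satisfies λ_min(E[P]) ≤ μ ≤ 2λ_min(E[P]), i.e. enforcing symmetry can up to double μ.) -/

import Mathlib

open Matrix Kronecker Finset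
open scoped ComplexOrder

/-! Writing `Qᵢ = 1 - Pᵢ`, one has `𝐙ᵢ = Pᵢ ⊗ 1 + Qᵢ ⊗ Pᵢ` with `Qᵢ ⊗ Pᵢ ⪰ 0` (a Kronecker product
of orthogonal projections), so `E[𝐙] ⪰ E[P] ⊗ 1 ⪰ λ_min(E[P]) • 1`. Conversely, testing `E[𝐙]` on
`u ⊗ u` for a unit eigenvector `u` of `E[P]` for `λ_min(E[P])`, with `tᵢ = uᵀ Pᵢ u`, gives
`λ_min(E[𝐙]) ≤ ∑ pᵢ (1 - (1 - tᵢ)²) ≤ 2 ∑ pᵢ tᵢ = 2 λ_min(E[P])`. -/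

namespace Matrix.IsHermitian

variable {𝕜 n : Type*} [RCLike 𝕜] [Fintype n] [DecidableEq n] {A : Matrix n n 𝕜}

theorem posSemidef_sub_smul_one_iff (hA : A.IsHermitian) (c : ℝ) :
    (A - c • 1).PosSemidef ↔ ∀ j, c ≤ hA.eigenvalues j := by
  have hc : (c • 1 : Matrix n n 𝕜) = algebraMap 𝕜 (Matrix n n 𝕜) c := by
    rw [Algebra.algebraMap_eq_smul_one, RCLike.real_smul_eq_coe_smul (K := 𝕜)]
  rw [posSemidef_iff_isHermitian_and_spectrum_nonneg, and_iff_right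
    (hA.sub (isHermitian_one.smul (IsSelfAdjoint.all c))), hc, ← spectrum.sub_singleton_eq,
    hA.spectrum_eq_image_range]
  simp [Set.subset_def, sub_nonneg]

theorem le_iInf_eigenvalues_iff [Nonempty n] (hA : A.IsHermitian) (c : ℝ) :
    c ≤ ⨅ j, hA.eigenvalues j ↔ (A - c • 1).PosSemidef := by
  rw [hA.posSemidef_sub_smul_one_iff, le_ciInf_iff (Finite.bddBelow_range _)]

theorem iInf_eigenvalues_mul_dotProduct_self_le [Nonempty n] {A : Matrix n n ℝ}
    (hA : A.IsHermitian) (x : n → ℝ) :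
    (⨅ j, hA.eigenvalues j) * (x ⬝ᵥ x) ≤ x ⬝ᵥ (A *ᵥ x) := by
  have h := ((hA.le_iInf_eigenvalues_iff _).1 le_rfl).dotProduct_mulVec_nonneg x
  rw [star_trivial, sub_mulVec, dotProduct_sub, smul_mulVec, one_mulVec, dotProduct_smul,
    smul_eq_mul] at h
  linarith

theorem exists_dotProduct_self_eq_one_mulVec_eq_iInf_eigenvalues_smul [Nonempty n]
    {A : Matrix n n ℝ} (hA : A.IsHermitian) :
    ∃ u : n → ℝ, u ⬝ᵥ u = 1 ∧ A *ᵥ u = (⨅ j, hA.eigenvalues j) • u := by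
  obtain ⟨j, hj⟩ := exists_eq_ciInf_of_finite (f := hA.eigenvalues)
  refine ⟨hA.eigenvectorBasis j, ?_, hj ▸ hA.mulVec_eigenvectorBasis j⟩
  have h := hA.eigenvectorBasis.inner_eq_one j
  rwa [EuclideanSpace.inner_eq_star_dotProduct, star_trivial] at h

end Matrix.IsHermitian

namespace Matrix

variable {ι l m n p R : Type*}

theorem sum_kronecker [NonUnitalNonAssocSemiring R] (s : Finset ι) (A : ι → Matrix l m R)
    (B : Matrix n p R) : (∑ i ∈ s, A i) ⊗ₖ B = ∑ i ∈ s, A i ⊗ₖ B := by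
  ext
  simp [Matrix.sum_apply, Finset.sum_mul]

theorem sub_kronecker [NonUnitalNonAssocRing R] (A B : Matrix l m R) (C : Matrix n p R) :
    (A - B) ⊗ₖ C = A ⊗ₖ C - B ⊗ₖ C := by
  ext
  simp [sub_mul]

theorem kronecker_sub [NonUnitalNonAssocRing R] (A : Matrix l m R) (B C : Matrix n p R) :
    A ⊗ₖ (B - C) = A ⊗ₖ B - A ⊗ₖ C := by
  ext
  simp [mul_sub]

theorem one_sub_kronecker_one_sub [Ring R] [DecidableEq l] [DecidableEq n] (P : Matrix l l R)
    (Q : Matrix n n R) : 1 - (1 - P) ⊗ₖ (1 - Q) = P ⊗ₖ 1 + (1 - P) ⊗ₖ Q := by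
  simp only [sub_kronecker, kronecker_sub, one_kronecker_one]
  abel

def kroneckerVec [Mul R] (u : l → R) (v : n → R) : l × n → R := fun q => u q.1 * v q.2

theorem kronecker_mulVec_kroneckerVec [CommSemiring R] [Fintype m] [Fintype p]
    (A : Matrix l m R) (B : Matrix n p R) (x : m → R) (y : p → R) :
    (A ⊗ₖ B) *ᵥ kroneckerVec x y = kroneckerVec (A *ᵥ x) (B *ᵥ y) := by
  ext ⟨i, k⟩
  simp only [mulVec, dotProduct, kroneckerVec, kroneckerMap_apply, Fintype.sum_prod_type,
    Finset.sum_mul_sum]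
  exact Finset.sum_congr rfl fun _ _ => Finset.sum_congr rfl fun _ _ => by ring

theorem kroneckerVec_dotProduct_kroneckerVec [CommSemiring R] [Fintype l] [Fintype n]
    (u x : l → R) (v y : n → R) :
    kroneckerVec u v ⬝ᵥ kroneckerVec x y = (u ⬝ᵥ x) * (v ⬝ᵥ y) := by
  simp only [dotProduct, kroneckerVec, Fintype.sum_prod_type, Finset.sum_mul_sum]
  exact Finset.sum_congr rfl fun _ _ => Finset.sum_congr rfl fun _ _ => by ring

theorem dotProduct_sum_smul_mulVec [CommSemiring R] [Fintype n] (s : Finset ι) (c : ι → R)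
    (A : ι → Matrix n n R) (x y : n → R) :
    x ⬝ᵥ ((∑ i ∈ s, c i • A i) *ᵥ y) = ∑ i ∈ s, c i * (x ⬝ᵥ (A i *ᵥ y)) := by
  simp [sum_mulVec, dotProduct_sum, smul_mulVec, dotProduct_smul]

theorem PosSemidef.of_isHermitian_of_isIdempotentElem {𝕜 : Type*} [RCLike 𝕜] [Fintype n]
    {P : Matrix n n 𝕜} (hP : P.IsHermitian) (hP2 : IsIdempotentElem P) : P.PosSemidef := by
  simpa only [hP.eq, hP2.eq] using posSemidef_conjTranspose_mul_self P

/-- The matrix of `X ↦ X P + P X (1 - P)` acting on vectorized `X`, for symmetric `P`. -/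
def symmPreservingProj [Ring R] [DecidableEq n] (P : Matrix n n R) : Matrix (n × n) (n × n) R :=
  1 - (1 - P) ⊗ₖ (1 - P)

theorem kroneckerVec_dotProduct_symmPreservingProj_mulVec [CommRing R] [Fintype n]
    [DecidableEq n] (P : Matrix n n R) {u : n → R} (hu : u ⬝ᵥ u = 1) :
    kroneckerVec u u ⬝ᵥ (symmPreservingProj P *ᵥ kroneckerVec u u) =
      1 - (1 - u ⬝ᵥ (P *ᵥ u)) ^ 2 := by
  rw [symmPreservingProj, sub_mulVec, one_mulVec, dotProduct_sub, kronecker_mulVec_kroneckerVec,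
    kroneckerVec_dotProduct_kroneckerVec, kroneckerVec_dotProduct_kroneckerVec, sub_mulVec,
    one_mulVec, dotProduct_sub, hu, sq, one_mul]

theorem sum_smul_symmPreservingProj [CommRing R] [DecidableEq n] (s : Finset ι) (p : ι → R)
    (P : ι → Matrix n n R) :
    ∑ i ∈ s, p i • symmPreservingProj (P i) =
      (∑ i ∈ s, p i • P i) ⊗ₖ 1 + ∑ i ∈ s, p i • ((1 - P i) ⊗ₖ P i) := by
  simp only [symmPreservingProj, one_sub_kronecker_one_sub, smul_add, sum_add_distrib,
    sum_kronecker, smul_kronecker]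

section Expectation

variable [Fintype ι] [Fintype n] [DecidableEq n] [Nonempty n]
  (P : ι → Matrix n n ℝ) {p : ι → ℝ}

theorem iInf_eigenvalues_le_iInf_eigenvalues_sum_symmPreservingProj (hp : ∀ i, 0 ≤ p i)
    (hP : ∀ i, (P i).IsHermitian) (hPidem : ∀ i, IsIdempotentElem (P i))
    (hEP : (∑ i, p i • P i).IsHermitian)
    (hEZ : (∑ i, p i • symmPreservingProj (P i)).IsHermitian) :
    ⨅ j, hEP.eigenvalues j ≤ ⨅ j, hEZ.eigenvalues j := by
  set a := ⨅ j, hEP.eigenvalues j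
  rw [hEZ.le_iInf_eigenvalues_iff, sum_smul_symmPreservingProj, add_sub_right_comm,
    ← one_kronecker_one, ← smul_kronecker, ← sub_kronecker]
  refine (((hEP.le_iInf_eigenvalues_iff a).1 le_rfl).kronecker PosSemidef.one).add
    (posSemidef_sum _ fun i _ => ?_)
  exact ((PosSemidef.of_isHermitian_of_isIdempotentElem (isHermitian_one.sub (hP i))
    (hPidem i).one_sub).kronecker
    (PosSemidef.of_isHermitian_of_isIdempotentElem (hP i) (hPidem i))).smul (hp i)

theorem iInf_eigenvalues_sum_symmPreservingProj_le_two_mul (hp : ∀ i, 0 ≤ p i)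
    (hEP : (∑ i, p i • P i).IsHermitian)
    (hEZ : (∑ i, p i • symmPreservingProj (P i)).IsHermitian) :
    ⨅ j, hEZ.eigenvalues j ≤ 2 * ⨅ j, hEP.eigenvalues j := by
  obtain ⟨u, hu, hEPu⟩ := hEP.exists_dotProduct_self_eq_one_mulVec_eq_iInf_eigenvalues_smul
  have hmin : ⨅ j, hEP.eigenvalues j = ∑ i, p i * (u ⬝ᵥ (P i *ᵥ u)) := by
    rw [← dotProduct_sum_smul_mulVec, hEPu, dotProduct_smul, hu, smul_eq_mul, mul_one]
  have hEZu := hEZ.iInf_eigenvalues_mul_dotProduct_self_le (kroneckerVec u u)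
  rw [kroneckerVec_dotProduct_kroneckerVec, hu, one_mul, mul_one, dotProduct_sum_smul_mulVec]
    at hEZu
  simp only [kroneckerVec_dotProduct_symmPreservingProj_mulVec _ hu] at hEZu
  calc ⨅ j, hEZ.eigenvalues j
      ≤ ∑ i, p i * (1 - (1 - u ⬝ᵥ (P i *ᵥ u)) ^ 2) := hEZu
    _ ≤ ∑ i, p i * (2 * (u ⬝ᵥ (P i *ᵥ u))) := by
      gcongr with i
      · exact hp i
      · nlinarith [sq_nonneg (u ⬝ᵥ (P i *ᵥ u))]
    _ = 2 * ⨅ j, hEP.eigenvalues j := by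
      rw [hmin, mul_sum]
      exact sum_congr rfl fun i _ => by ring

end Expectation

end Matrix

theorem lambda_min_bigZ_bounds_general {n m : ℕ} (hn : 0 < n)
    (P : Fin m → Matrix (Fin n) (Fin n) ℝ)
    (hPsym : ∀ i, (P i).IsSymm) (hPidem : ∀ i, P i * P i = P i)
    (p : Fin m → ℝ) (hp : ∀ i, 0 ≤ p i)
    (Zb : Fin m → Matrix (Fin n × Fin n) (Fin n × Fin n) ℝ)
    (hZb : ∀ i, Zb i = (1 : Matrix (Fin n × Fin n) (Fin n × Fin n) ℝ)
        - (1 - P i) ⊗ₖ (1 - P i)) :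
    ∀ (hEP : (∑ i, p i • P i).IsHermitian) (hEZ : (∑ i, p i • Zb i).IsHermitian),
      (⨅ j, hEP.eigenvalues j) ≤ (⨅ j, hEZ.eigenvalues j) ∧
      (⨅ j, hEZ.eigenvalues j) ≤ 2 * (⨅ j, hEP.eigenvalues j) := by
  obtain rfl : Zb = fun i => symmPreservingProj (P i) := funext hZb
  have : Nonempty (Fin n) := ⟨⟨0, hn⟩⟩
  intro hEP hEZ
  exact ⟨iInf_eigenvalues_le_iInf_eigenvalues_sum_symmPreservingProj P hp
      (fun i => isHermitian_iff_isSymm.2 (hPsym i)) hPidem hEP hEZ,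
    iInf_eigenvalues_sum_symmPreservingProj_le_two_mul P hp hEP hEZ⟩

/-- For symmetric idempotent matrices P₁,…,P_m, a probability vector p,
and 𝐙ᵢ := I⊗I − (I−Pᵢ)⊗(I−Pᵢ), we have
λ_min(Σ pᵢ Pᵢ) ≤ λ_min(Σ pᵢ 𝐙ᵢ) ≤ 2 λ_min(Σ pᵢ Pᵢ). -/
theorem lambda_min_bigZ_bounds {n m : ℕ} (hn : 0 < n)
    (P : Fin m → Matrix (Fin n) (Fin n) ℝ)
    (hPsym : ∀ i, (P i).IsSymm) (hPidem : ∀ i, P i * P i = P i)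
    (p : Fin m → ℝ) (hp : ∀ i, 0 ≤ p i) (hps : ∑ i, p i = 1)
    (Zb : Fin m → Matrix (Fin n × Fin n) (Fin n × Fin n) ℝ)
    (hZb : ∀ i, Zb i = (1 : Matrix (Fin n × Fin n) (Fin n × Fin n) ℝ)
        - (1 - P i) ⊗ₖ (1 - P i)) :
    ∀ (hEP : (∑ i, p i • P i).IsHermitian) (hEZ : (∑ i, p i • Zb i).IsHermitian),
      (⨅ j, hEP.eigenvalues j) ≤ (⨅ j, hEZ.eigenvalues j) ∧
      (⨅ j, hEZ.eigenvalues j) ≤ 2 * (⨅ j, hEP.eigenvalues j) :=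
  lambda_min_bigZ_bounds_general hn P hPsym hPidem p hp Zb hZb
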